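/- arXiv:1605.09740 — 2 statements merged into one kernel-verified Lean document; each statement's English description precedes it below -/
import Mathlib

section
/- Let D be a principal ideal domain (left and right) that is also a left V-ring (every simple left D-module is injective) and not a division ring. Then every finitely generated left D-module is the direct sum of a projective module and a semisimple module. -/
/-!
The socle `S` of `M` (the sum of its simple submodules) is a finitely generated semisimple
module, hence a finite direct sum of simple modules, hence injective because `D` is a left
V-ring; so it splits off, `M = P ⊕ S`. The complement `P` is torsion-free: a nonzero torsion
element `x` with `a • x = 0` generates a quotient of `D ⧸ D a`, and `D ⧸ D a` is Artinian
(a strictly descending chain of left ideals `D bₙ ⊇ D a` yields, through the cofactors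
`a = cₙ bₙ`, a strictly ascending chain of right ideals `cₙ D`), so `D x` would contain a
simple submodule, which lies in `P ∩ S = 0`. Finally a finitely generated torsion-free
module embeds into `Qᵏ` for the skew field of fractions `Q`; clearing right denominators
embeds it into `Dᵏ`, and submodules of `Dᵏ` are projective by splitting off one coordinate
at a time, whose image is a principal left ideal.
-/

universe u

open MulOpposite OreLocalization nonZeroDivisors

section Artinian

variable {D : Type*} [Ring D] [IsDomain D]

theorem span_op_lt_span_op_of_span_lt {a b b' c c' : D} (ha : a ≠ 0) (hb : c * b = a)
    (hb' : c' * b' = a) (h : Ideal.span {b'} < Ideal.span {b}) :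
    Ideal.span {op c} < Ideal.span {op c'} := by
  obtain ⟨d, rfl⟩ := Ideal.mem_span_singleton'.mp (h.le (Ideal.mem_span_singleton_self b'))
  have hc : c = c' * d := mul_right_cancel₀ (right_ne_zero_of_mul (hb ▸ ha))
    (by rw [hb, mul_assoc, hb'])
  refine lt_of_le_not_ge ?_ fun hle ↦ h.not_ge ?_
  · rw [Ideal.span_singleton_le_iff_mem, Ideal.mem_span_singleton', hc]
    exact ⟨op d, rfl⟩
  · obtain ⟨e, he⟩ := Ideal.mem_span_singleton'.mp
      ((Ideal.span_singleton_le_iff_mem _).mp hle)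
    have he' : c * unop e = c' := by simpa using congrArg unop he
    have hed : unop e * d = 1 :=
      mul_left_cancel₀ (left_ne_zero_of_mul (hb ▸ ha)) (by rw [mul_one, ← mul_assoc, he', ← hc])
    rw [Ideal.span_singleton_le_iff_mem, Ideal.mem_span_singleton']
    exact ⟨unop e, by rw [← mul_assoc, hed, one_mul]⟩

variable [IsPrincipalIdealRing D] [IsNoetherianRing Dᵐᵒᵖ]

theorem wellFoundedLT_Ici_span_singleton {a : D} (ha : a ≠ 0) :
    WellFoundedLT (Set.Ici (Ideal.span {a})) := by
  have cofactor (I : Set.Ici (Ideal.span {a})) :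
      ∃ c, c * Submodule.IsPrincipal.generator I.1 = a := by
    rw [← Ideal.mem_span_singleton', Ideal.span_singleton_generator]
    exact I.2 (Ideal.mem_span_singleton_self a)
  choose c hc using cofactor
  refine StrictAnti.wellFoundedLT (f := fun I ↦ Ideal.span {op (c I)}) fun I J hIJ ↦ ?_
  refine span_op_lt_span_op_of_span_lt ha (hc J) (hc I) ?_
  simpa only [Ideal.span_singleton_generator] using Subtype.coe_lt_coe.mpr hIJ

theorem isArtinian_quotient_span_singleton {a : D} (ha : a ≠ 0) :
    IsArtinian D (D ⧸ Ideal.span {a}) :=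
  have := wellFoundedLT_Ici_span_singleton ha
  (Submodule.comapMkQRelIso _).strictMono.wellFoundedLT

end Artinian

theorem IsArtinian.exists_isSimpleModule_le {R M : Type*} [Ring R] [AddCommGroup M] [Module R M]
    {N : Submodule R M} [IsArtinian R N] (hN : N ≠ ⊥) : ∃ m ≤ N, IsSimpleModule R m := by
  have : Nontrivial (Submodule R N) := by
    rwa [Submodule.nontrivial_iff, Submodule.nontrivial_iff_ne_bot]
  have := isAtomic_of_orderBot_wellFounded_lt (α := Submodule R N) wellFounded_lt
  obtain ⟨m, hm⟩ := IsAtomic.exists_atom (Submodule R N)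
  refine ⟨_, N.map_subtype_le m, ?_⟩
  rw [← isSimpleModule_iff_isAtom] at hm
  exact .congr (m.equivMapOfInjective _ N.subtype_injective).symm

theorem isSemisimpleModule_sSup_simples (R M : Type*) [Ring R] [AddCommGroup M] [Module R M] :
    IsSemisimpleModule R ↥(sSup {m : Submodule R M | IsSimpleModule R m}) := by
  rw [sSup_eq_iSup]
  exact isSemisimpleModule_biSup_of_isSemisimpleModule_submodule (p := id) fun m hm ↦
    have : IsSimpleModule R m := hm
    show IsSemisimpleModule R m from inferInstance

section Torsion

variable {D : Type*} [Ring D] [IsDomain D] [IsPrincipalIdealRing D] [IsNoetherianRing Dᵐᵒᵖ]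
  {M : Type*} [AddCommGroup M] [Module D M]

theorem exists_isSimpleModule_le_span_singleton {x : M} (hx : x ≠ 0) {a : D} (ha : a ≠ 0)
    (hax : a • x = 0) : ∃ N ≤ Submodule.span D {x}, IsSimpleModule D N := by
  have := isArtinian_quotient_span_singleton ha
  have hker : Ideal.span {a} ≤ LinearMap.ker (LinearMap.toSpanSingleton D M x) := by
    simpa [Ideal.span_singleton_le_iff_mem] using hax
  have : IsArtinian D (Submodule.span D {x}) := by
    rw [LinearMap.span_singleton_eq_range, ← Submodule.range_liftQ _ _ hker]
    infer_instance
  exact IsArtinian.exists_isSimpleModule_le (by simpa using hx)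

theorem isTorsionFree_of_disjoint_sSup_simples {P : Submodule D M}
    (hP : Disjoint P (sSup {m : Submodule D M | IsSimpleModule D m})) :
    Module.IsTorsionFree D P := by
  refine .of_smul_eq_zero fun d y hdy ↦ or_iff_not_imp_left.mpr fun hd ↦ ?_
  by_contra hy
  obtain ⟨N, hNy, hN⟩ := exists_isSimpleModule_le_span_singleton (x := (y : M))
    (by simpa using hy) hd (by simpa using congrArg Subtype.val hdy)
  have hNP : N ≤ P := hNy.trans ((Submodule.span_singleton_le_iff_mem _ _).mpr y.2)
  exact ((isSimpleModule_iff_isAtom).mp hN).1 (le_bot_iff.mp (hP hNP (le_sSup hN)))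

end Torsion

section VRing

variable {R : Type u} [Ring R]

theorem Module.Injective.of_linearEquiv {M N : Type u} [AddCommGroup M] [Module R M]
    [AddCommGroup N] [Module R N] [Module.Injective R M] (e : M ≃ₗ[R] N) :
    Module.Injective R N :=
  Module.Injective.of_ringEquiv (RingEquiv.refl R) e

theorem injective_of_isSemisimpleModule
    (hV : ∀ (S : Type u) [AddCommGroup S] [Module R S], IsSimpleModule R S → Module.Injective R S)
    (M : Type u) [AddCommGroup M] [Module R M] [IsSemisimpleModule R M] [Module.Finite R M] :
    Module.Injective R M := by
  classical
  obtain ⟨n, S, e, hS⟩ := IsSemisimpleModule.exists_linearEquiv_fin_dfinsupp R M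
  have := fun i ↦ hV (S i) (hS i)
  exact .of_linearEquiv (e.trans DFinsupp.linearEquivFunOnFintype).symm

theorem Submodule.exists_isCompl_of_injective {M : Type u} [AddCommGroup M] [Module R M]
    (S : Submodule R M) [Module.Injective R S] : ∃ P : Submodule R M, IsCompl S P := by
  obtain ⟨r, hr⟩ := Module.Injective.out S.subtype S.injective_subtype LinearMap.id
  exact ⟨_, LinearMap.isCompl_of_proj hr⟩

end VRing

section Projective

theorem Module.Projective.of_surjective_of_projective_ker {R M P : Type*} [Ring R]
    [AddCommGroup M] [Module R M] [AddCommGroup P] [Module R P] [Module.Projective R P]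
    {g : M →ₗ[R] P} (hg : Function.Surjective g) [Module.Projective R (LinearMap.ker g)] :
    Module.Projective R M := by
  obtain ⟨l, hl⟩ := Module.projective_lifting_property g LinearMap.id hg
  exact .of_equiv' ((LinearMap.exact_subtype_ker_map g).splitSurjectiveEquiv
    (LinearMap.ker g).injective_subtype ⟨l, hl⟩).1.symm

variable {D : Type*} [Ring D] [IsDomain D]

theorem Ideal.projective_of_isPrincipal (I : Ideal D) [I.IsPrincipal] :
    Module.Projective D I := by
  obtain ⟨c, rfl⟩ := Submodule.IsPrincipal.principal I
  rcases eq_or_ne c 0 with rfl | hc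
  · have : Subsingleton (Ideal.span {(0 : D)}) := by
      rw [Ideal.span_singleton_eq_bot.mpr rfl]
      infer_instance
    infer_instance
  · change Module.Projective D (Submodule.span D {c})
    rw [LinearMap.span_singleton_eq_range]
    exact .of_equiv' (LinearEquiv.ofInjective _ fun x y h ↦ mul_right_cancel₀ hc h)

theorem projective_of_injective_pi [IsPrincipalIdealRing D] {X : Type*} [AddCommGroup X]
    [Module D X] {n : ℕ} (f : X →ₗ[D] Fin n → D) (hf : Function.Injective f) :
    Module.Projective D X := by
  induction n generalizing X with
  | zero =>
    have : Subsingleton X := hf.subsingleton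
    infer_instance
  | succ n ih =>
    let g := (LinearMap.proj 0).comp f
    have : Module.Projective D (LinearMap.range g) := Ideal.projective_of_isPrincipal _
    have : Module.Projective D (LinearMap.ker g.rangeRestrict) := by
      refine ih ((LinearMap.funLeft D D Fin.succ).comp (f.comp (LinearMap.ker _).subtype)) ?_
      rw [← LinearMap.ker_eq_bot, LinearMap.ker_eq_bot']
      rintro ⟨x, hx⟩ hx0
      have hfx : f x = 0 := by
        funext i
        cases i using Fin.cases with
        | zero => simpa [g] using hx
        | succ i => exact congrFun hx0 i
      simpa using hf (hfx.trans f.map_zero.symm)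
    exact .of_surjective_of_projective_ker g.surjective_rangeRestrict

end Projective

theorem exists_mul_eq_mul_of_ne_zero {D : Type*} [Ring D] [IsDomain D] [OreSet Dᵐᵒᵖ⁰] (x : D)
    {s : D} (hs : s ≠ 0) : ∃ b t : D, t ≠ 0 ∧ x * t = s * b := by
  let s' : Dᵐᵒᵖ⁰ := ⟨op s, mem_nonZeroDivisors_of_ne_zero (by simpa)⟩
  refine ⟨unop (oreNum (op x) s'), unop (oreDenom (op x) s'), ?_, ?_⟩
  · simp
  · simpa [s'] using congrArg unop (ore_eq (op x) s')

section OreLocalization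

variable {D : Type*} [Ring D] [OreSet D⁰]

variable (D) in
def numeratorLinearMap (X : Type*) [AddCommGroup X] [Module D X] :
    X →ₗ[D] X[D⁰⁻¹] where
  toFun x := x /ₒ 1
  map_add' _ _ := add_oreDiv.symm
  map_smul' _ _ := (smul_oreDiv_one _ _).symm

theorem span_image_numeratorLinearMap {X : Type*} [AddCommGroup X] [Module D X]
    {s : Set X} (hs : Submodule.span D s = ⊤) :
    Submodule.span D[D⁰⁻¹] (numeratorLinearMap D X '' s) = ⊤ := by
  refine eq_top_iff.mpr fun z _ ↦ ?_
  induction z using OreLocalization.ind with | _ x t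
  have hx : numeratorLinearMap D X x ∈
      (Submodule.span D[D⁰⁻¹] (numeratorLinearMap D X '' s)).restrictScalars D := by
    refine Submodule.span_le_restrictScalars D D[D⁰⁻¹] _ ?_
    rw [← Submodule.map_span, hs]
    exact Submodule.mem_map_of_mem trivial
  rw [← one_mul t, ← OreLocalization.one_div_smul]
  exact Submodule.smul_mem _ _ hx

instance (X : Type*) [AddCommGroup X] [Module D X] [Module.Finite D X] :
    Module.Finite D[D⁰⁻¹] X[D⁰⁻¹] := by
  classical
  obtain ⟨s, hs⟩ := Module.Finite.fg_top (R := D) (M := X)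
  exact ⟨⟨s.image (numeratorLinearMap D X), by simpa using span_image_numeratorLinearMap hs⟩⟩

variable [IsDomain D]

theorem numeratorHom_injective : Function.Injective (numeratorHom : D →* D[D⁰⁻¹]) :=
  numeratorHom_inj fun _ hs _ h ↦ (mul_eq_zero.mp h).resolve_left (nonZeroDivisors.ne_zero hs)

theorem numeratorLinearMap_injective (X : Type*) [AddCommGroup X] [Module D X]
    [Module.IsTorsionFree D X] : Function.Injective (numeratorLinearMap D X) := by
  intro x y h
  obtain ⟨u, v, hxy, huv⟩ := oreDiv_eq_iff.mp h
  obtain rfl : (u : D) = v := by simpa using huv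
  exact ((smul_right_injective X (nonZeroDivisors.ne_zero u.2)) hxy).symm

variable [OreSet Dᵐᵒᵖ⁰]

theorem exists_mul_numeratorHom_mem_range (q : D[D⁰⁻¹]) :
    ∃ t : D, t ≠ 0 ∧ q * numeratorHom t ∈ Set.range numeratorHom := by
  induction q using OreLocalization.ind with | _ x s
  obtain ⟨b, t, ht, hxt⟩ := exists_mul_eq_mul_of_ne_zero x (nonZeroDivisors.ne_zero s.2)
  refine ⟨t, ht, b, ?_⟩
  rw [numeratorHom_apply, numeratorHom_apply, mul_div_one, hxt, OreLocalization.expand' b 1 s,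
    mul_one, Submonoid.smul_def, smul_eq_mul]

theorem exists_forall_mul_numeratorHom_mem_range (s : Finset D[D⁰⁻¹]) :
    ∃ t : D, t ≠ 0 ∧ ∀ q ∈ s, q * numeratorHom t ∈ Set.range numeratorHom := by
  classical
  induction s using Finset.induction_on with
  | empty => exact ⟨1, one_ne_zero, by simp⟩
  | insert q s _ ih =>
    obtain ⟨t, ht, hs⟩ := ih
    obtain ⟨t', ht', a, ha⟩ := exists_mul_numeratorHom_mem_range (q * numeratorHom t)
    refine ⟨t * t', mul_ne_zero ht ht', fun p hp ↦ ?_⟩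
    rw [map_mul, ← mul_assoc]
    obtain rfl | hp := Finset.mem_insert.mp hp
    · exact ⟨a, ha⟩
    · obtain ⟨b, hb⟩ := hs p hp
      exact ⟨b * t', by rw [← hb, map_mul]⟩

theorem exists_injective_pi_of_isTorsionFree (X : Type*) [AddCommGroup X] [Module D X]
    [Module.Finite D X] [Module.IsTorsionFree D X] :
    ∃ (n : ℕ) (f : X →ₗ[D] Fin n → D), Function.Injective f := by
  classical
  obtain ⟨s, hs⟩ := Module.Finite.fg_top (R := D) (M := X)
  let b := Module.finBasis D[D⁰⁻¹] X[D⁰⁻¹]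
  let coord : X →ₗ[D] (Fin _ → D[D⁰⁻¹]) :=
    (b.equivFun.restrictScalars D).toLinearMap ∘ₗ numeratorLinearMap D X
  obtain ⟨t, ht, hden⟩ := exists_forall_mul_numeratorHom_mem_range
    (s.biUnion fun x ↦ Finset.univ.image (coord x))
  let F := (LinearMap.mulRight D (numeratorHom t : D[D⁰⁻¹])).compLeft _ ∘ₗ coord
  let G := (numeratorLinearMap D D).compLeft (Fin (Module.finrank D[D⁰⁻¹] X[D⁰⁻¹]))
  have ht' : (numeratorHom t : D[D⁰⁻¹]) ≠ 0 := by
    simpa [← map_zero numeratorHom] using numeratorHom_injective.ne ht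
  have hF : Function.Injective F :=
    (Function.Injective.comp_left fun _ _ h ↦ mul_right_cancel₀ ht' h).comp
      (b.equivFun.injective.comp (numeratorLinearMap_injective X))
  have hG : Function.Injective G := numeratorHom_injective.comp_left
  have hFG : LinearMap.range F ≤ LinearMap.range G := by
    rw [LinearMap.range_eq_map, ← hs, Submodule.map_span, Submodule.span_le]
    rintro _ ⟨x, hx, rfl⟩
    choose a ha using fun j ↦ hden (coord x j)
      (Finset.mem_biUnion.mpr ⟨x, hx, Finset.mem_image_of_mem _ (Finset.mem_univ j)⟩)
    exact ⟨a, funext ha⟩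
  refine ⟨_, (LinearEquiv.ofInjective G hG).symm.toLinearMap ∘ₗ
    F.codRestrict _ fun x ↦ hFG ⟨x, rfl⟩, ?_⟩
  rw [LinearMap.coe_comp]
  exact (LinearEquiv.injective _).comp fun x y h ↦ hF (congrArg Subtype.val h)

end OreLocalization

theorem projective_of_isTorsionFree {D : Type*} [Ring D] [IsDomain D] [IsPrincipalIdealRing D]
    [IsNoetherianRing Dᵐᵒᵖ] (X : Type*) [AddCommGroup X] [Module D X] [Module.Finite D X]
    [Module.IsTorsionFree D X] : Module.Projective D X := by
  obtain ⟨_⟩ := nonempty_oreSet_of_strongRankCondition (R := D)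
  obtain ⟨_⟩ := nonempty_oreSet_of_strongRankCondition (R := Dᵐᵒᵖ)
  obtain ⟨n, f, hf⟩ := exists_injective_pi_of_isTorsionFree (D := D) X
  exact projective_of_injective_pi f hf

theorem stmt13_general (D : Type u) [Ring D] [IsDomain D]
    (hleft : ∀ I : Ideal D, I.IsPrincipal)
    (hright : ∀ I : Ideal Dᵐᵒᵖ, I.IsPrincipal)
    (hV : ∀ (S : Type u) [AddCommGroup S] [Module D S], IsSimpleModule D S →
      Module.Injective D S)
    (M : Type u) [AddCommGroup M] [Module D M] [Module.Finite D M] :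
    ∃ P S : Submodule D M, IsCompl P S ∧ Module.Projective D P ∧ IsSemisimpleModule D S := by
  have : IsPrincipalIdealRing D := ⟨hleft⟩
  have : IsPrincipalIdealRing Dᵐᵒᵖ := ⟨hright⟩
  let S := sSup {N : Submodule D M | IsSimpleModule D N}
  have : IsSemisimpleModule D S := isSemisimpleModule_sSup_simples D M
  have : Module.Injective D S := injective_of_isSemisimpleModule hV S
  obtain ⟨P, hSP⟩ := S.exists_isCompl_of_injective
  have : Module.IsTorsionFree D P := isTorsionFree_of_disjoint_sSup_simples hSP.disjoint.symm
  have : Module.Finite D P := .equiv (S.quotientEquivOfIsCompl P hSP)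
  exact ⟨P, S, hSP.symm, projective_of_isTorsionFree P, ‹_›⟩

/-- Let `D` be a (left and right) principal ideal domain which is a left V-ring
(every simple left `D`-module is injective) and not a division ring. Then every
finitely generated left `D`-module is a direct sum of a projective module and a
semisimple module. -/
theorem stmt13 (D : Type u) [Ring D] [IsDomain D]
    (hleft : ∀ I : Ideal D, I.IsPrincipal)
    (hright : ∀ I : Ideal Dᵐᵒᵖ, I.IsPrincipal)
    (hV : ∀ (S : Type u) [AddCommGroup S] [Module D S], IsSimpleModule D S →
      Module.Injective D S)
    (hnotdiv : ∃ x : D, x ≠ 0 ∧ ¬IsUnit x)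
    (M : Type u) [AddCommGroup M] [Module D M] [Module.Finite D M] :
    ∃ P S : Submodule D M, IsCompl P S ∧ Module.Projective D P ∧ IsSemisimpleModule D S :=
  stmt13_general D hleft hright hV M
end

section
/- Every finitely generated module in which every submodule is virtually semisimple (i.e., every finitely generated completely virtually semisimple module) is a finite direct sum of virtually simple modules. -/
def VirtuallySemisimple (R : Type*) [Ring R] (M : Type*) [AddCommGroup M] [Module R M] : Prop :=
  ∀ N : Submodule R M, ∃ N' : Submodule R M, (∃ C : Submodule R M, IsCompl N' C) ∧
    Nonempty (N ≃ₗ[R] N')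

def VirtuallySimple (R : Type*) [Ring R] (M : Type*) [AddCommGroup M] [Module R M] : Prop :=
  Nontrivial M ∧ ∀ N : Submodule R M, N ≠ ⊥ → Nonempty (N ≃ₗ[R] M)

/-! A finitely generated virtually semisimple module is noetherian: each submodule is isomorphic
to a direct summand, hence to a quotient. In a noetherian module every nonzero submodule contains a
uniform one, and a uniform virtually semisimple module is virtually simple, because a summand
isomorphic to a nonzero submodule cannot have a nonzero complement. Hence every nonzero direct
summand `D` of `M` splits off a virtually simple summand (the copy, inside `D`, of a uniform
submodule of `D`), so a maximal direct summand that is a finite independent sum of virtually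
simple submodules must be all of `M`. -/

section Lattice

variable {α : Type*} [Lattice α] [OrderBot α]

def IsUniform (u : α) : Prop :=
  u ≠ ⊥ ∧ ∀ a ≤ u, ∀ b ≤ u, Disjoint a b → a = ⊥ ∨ b = ⊥

variable [IsModularLattice α]

/- Take `x` maximal such that some nonzero `b ≤ a` is disjoint from it. If `b` contained disjoint
nonzero `c` and `d`, then `d` would be disjoint from the larger `x ⊔ c`. -/
theorem exists_isUniform_le [WellFoundedGT α] {a : α} (ha : a ≠ ⊥) : ∃ u ≤ a, IsUniform u := by
  obtain ⟨x, ⟨b, hba, hb, hbx⟩, hmax⟩ := wellFounded_gt.has_min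
    {x | ∃ b ≤ a, b ≠ ⊥ ∧ Disjoint b x} ⟨⊥, a, le_rfl, ha, disjoint_bot_right⟩
  refine ⟨b, hba, hb, fun c hcb d hdb hcd => ?_⟩
  by_contra! hne
  have hdx : Disjoint d (c ⊔ x) :=
    hcd.symm.disjoint_sup_right_of_disjoint_sup_left (hbx.mono_left (sup_le hdb hcb))
  refine hmax (x ⊔ c) ⟨d, hdb.trans hba, hne.2, sup_comm x c ▸ hdx⟩
    (left_lt_sup.mpr fun hcx => hne.1 (hbx.mono hcb hcx).eq_bot_of_self)

end Lattice

theorem IsCompl.sup_left_of_disjoint {α : Type*} [Lattice α] [BoundedOrder α]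
    [IsModularLattice α] {a b c : α} (h : IsCompl a (b ⊔ c)) (hbc : Disjoint b c) :
    IsCompl (a ⊔ b) c :=
  ⟨hbc.disjoint_sup_left_of_disjoint_sup_right h.disjoint, by
    simpa only [codisjoint_iff, sup_assoc] using h.codisjoint⟩

theorem Finset.SupIndep.exists_fin {α : Type*} [CompleteLattice α] {s : Finset α}
    (hs : s.SupIndep id) :
    ∃ (n : ℕ) (V : Fin n → α), iSupIndep V ∧ iSup V = s.sup id ∧ ∀ i, V i ∈ s := by
  refine ⟨s.card, fun i => s.equivFin.symm i, ?_, ?_, fun i => (s.equivFin.symm i).2⟩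
  · exact (iSupIndep_comp_coe_iff_supIndep.mpr hs).comp s.equivFin.symm.injective
  · rw [s.equivFin.symm.iSup_comp (g := fun x : s => (x : α)), Finset.sup_id_eq_sSup,
      sSup_eq_iSup']
    rfl

section Module

variable {R : Type*} [Ring R] {M M₂ : Type*} [AddCommGroup M] [Module R M]
  [AddCommGroup M₂] [Module R M₂]

theorem Submodule.ne_bot_of_linearEquiv {N : Submodule R M} {N' : Submodule R M₂}
    (e : N ≃ₗ[R] N') (hN : N ≠ ⊥) : N' ≠ ⊥ := by
  rw [← Submodule.nontrivial_iff_ne_bot] at hN ⊢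
  exact e.symm.toEquiv.nontrivial

theorem VirtuallySemisimple.of_linearEquiv (e : M ≃ₗ[R] M₂) (h : VirtuallySemisimple R M) :
    VirtuallySemisimple R M₂ := by
  intro N
  obtain ⟨N', ⟨C, hC⟩, ⟨f⟩⟩ := h (N.map (e.symm : M₂ →ₗ[R] M))
  refine ⟨Submodule.orderIsoMapComap e N', ⟨_, (Submodule.orderIsoMapComap e).isCompl hC⟩, ?_⟩
  exact ⟨(e.symm.submoduleMap N).trans (f.trans (e.submoduleMap N'))⟩

theorem VirtuallySimple.of_linearEquiv (e : M ≃ₗ[R] M₂) (h : VirtuallySimple R M) :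
    VirtuallySimple R M₂ := by
  obtain ⟨hnt, hsub⟩ := h
  refine ⟨e.symm.toEquiv.nontrivial, fun N hN => ?_⟩
  obtain ⟨f⟩ := hsub _ (mt (Submodule.map_eq_bot_iff (e := e.symm)).mp hN)
  exact ⟨(e.symm.submoduleMap N).trans (f.trans e)⟩

theorem VirtuallySemisimple.isNoetherian [Module.Finite R M] (h : VirtuallySemisimple R M) :
    IsNoetherian R M := by
  refine isNoetherian_def.mpr fun N => ?_
  obtain ⟨N', ⟨C, hC⟩, ⟨f⟩⟩ := h N
  have : Module.Finite R N' :=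
    Module.Finite.iff_fg.mpr (Submodule.CoFG.of_finite.fg_of_isCompl hC.symm)
  exact Module.Finite.iff_fg.mp (Module.Finite.equiv f.symm)

theorem VirtuallySemisimple.virtuallySimple_of_isUniform {U : Submodule R M} (hU : IsUniform U)
    (h : VirtuallySemisimple R U) : VirtuallySimple R U := by
  refine ⟨Submodule.nontrivial_iff_ne_bot.mpr hU.1, fun N hN => ?_⟩
  obtain ⟨N', ⟨C, hN'C⟩, ⟨f⟩⟩ := h N
  have hmap_eq_bot {K : Submodule R U} : K.map U.subtype = ⊥ → K = ⊥ := fun hK =>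
    Submodule.map_injective_of_injective U.injective_subtype (hK.trans (Submodule.map_bot _).symm)
  have hC : C = ⊥ := by
    rcases hU.2 _ (Submodule.map_subtype_le U N') _ (Submodule.map_subtype_le U C)
      (Submodule.disjoint_map U.injective_subtype hN'C.disjoint) with hN' | hC'
    · exact absurd (hmap_eq_bot hN') (Submodule.ne_bot_of_linearEquiv f hN)
    · exact hmap_eq_bot hC'
  exact ⟨f.trans (LinearEquiv.ofTop N' (eq_top_of_isCompl_bot (hC ▸ hN'C)))⟩

theorem VirtuallySemisimple.exists_summand_of_le {D K : Submodule R M}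
    (hD : VirtuallySemisimple R D) (hK : K ≤ D) :
    ∃ K' E : Submodule R M, Disjoint K' E ∧ K' ⊔ E = D ∧ Nonempty (K ≃ₗ[R] K') := by
  obtain ⟨K', ⟨E, hE⟩, ⟨f⟩⟩ := hD (K.comap D.subtype)
  refine ⟨K'.map D.subtype, E.map D.subtype,
    Submodule.disjoint_map D.injective_subtype hE.disjoint, ?_, ?_⟩
  · rw [← Submodule.map_sup, hE.sup_eq_top, Submodule.map_top, Submodule.range_subtype]
  · exact ⟨(Submodule.comapSubtypeEquivOfLe hK).symm.trans
      (f.trans (Submodule.equivMapOfInjective _ D.injective_subtype K'))⟩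

theorem exists_virtuallySimple_summand_of_ne_bot [IsNoetherian R M]
    (h : ∀ N : Submodule R M, VirtuallySemisimple R N) {D : Submodule R M} (hD : D ≠ ⊥) :
    ∃ U E : Submodule R M, U ≠ ⊥ ∧ VirtuallySimple R U ∧ Disjoint U E ∧ U ⊔ E = D := by
  obtain ⟨U₀, hU₀D, hU₀⟩ := exists_isUniform_le hD
  obtain ⟨U, E, hUE, hsup, ⟨e⟩⟩ := (h D).exists_summand_of_le hU₀D
  exact ⟨U, E, Submodule.ne_bot_of_linearEquiv e hU₀.1,
    ((h U₀).virtuallySimple_of_isUniform hU₀).of_linearEquiv e, hUE, hsup⟩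

theorem exists_supIndep_virtuallySimple_sup_eq_top [IsNoetherian R M]
    (h : ∀ N : Submodule R M, VirtuallySemisimple R N) :
    ∃ s : Finset (Submodule R M), s.SupIndep id ∧ s.sup id = ⊤ ∧
      ∀ U ∈ s, VirtuallySimple R U := by
  classical
  obtain ⟨_, ⟨s, hind, hvs, rfl, D, hD⟩, hmax⟩ := set_has_maximal_iff_noetherian.mpr ‹_›
    {N | ∃ s : Finset (Submodule R M), s.SupIndep id ∧ (∀ U ∈ s, VirtuallySimple R U) ∧
      s.sup id = N ∧ ∃ D, IsCompl N D}
    ⟨⊥, ∅, Finset.supIndep_empty _, by simp, rfl, ⊤, isCompl_bot_top⟩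
  refine ⟨s, hind, ?_, hvs⟩
  by_contra hne
  have hD0 : D ≠ ⊥ := fun hD0 => hne (eq_top_of_isCompl_bot (hD0 ▸ hD))
  obtain ⟨U, E, hU, hvU, hUE, rfl⟩ := exists_virtuallySimple_summand_of_ne_bot h hD0
  have hdisj : Disjoint U (s.sup id) := (hD.disjoint.mono_right le_sup_left).symm
  refine hmax (s.sup id ⊔ U) ⟨insert U s, hind.insert hdisj,
    Finset.forall_mem_insert _ _ _ |>.mpr ⟨hvU, hvs⟩, ?_, E, hD.sup_left_of_disjoint hUE⟩
    (left_lt_sup.mpr fun hle => hU (hdisj.eq_bot_of_le hle))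
  rw [Finset.sup_insert, id, sup_comm]

end Module

/-- Every finitely generated completely virtually semisimple module is a finite
direct sum of virtually simple modules. -/
theorem stmt17 (R : Type*) [Ring R] (M : Type*) [AddCommGroup M] [Module R M]
    [Module.Finite R M] (h : ∀ N : Submodule R M, VirtuallySemisimple R N) :
    ∃ (n : ℕ) (V : Fin n → Submodule R M), iSupIndep V ∧ iSup V = ⊤ ∧
      ∀ i, VirtuallySimple R (V i) := by
  have : IsNoetherian R M := ((h ⊤).of_linearEquiv Submodule.topEquiv).isNoetherian
  obtain ⟨s, hind, htop, hvs⟩ := exists_supIndep_virtuallySimple_sup_eq_top h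
  obtain ⟨n, V, hV, hsup, hmem⟩ := hind.exists_fin
  exact ⟨n, V, hV, hsup.trans htop, fun i => hvs _ (hmem i)⟩
end
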